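/- arXiv:2405.16149 — 2 statements merged into one kernel-verified Lean document; each statement's English description precedes it below -/
import Mathlib

section
/- In a minimum-size unsatisfiable (3,4)-formula F, for every variable y of degree 2, the two clauses containing y have the form {y,a,b} and {¬y,a,b} for some literals a,b; that is, the two clauses agree on all literals other than y and ¬y. -/
abbrev Lit := ℕ × Bool

def Lit.neg (l : Lit) : Lit := (l.1, !l.2)

abbrev Clause := Finset Lit

def Clause.nontaut (C : Clause) : Prop := ∀ l ∈ C, Lit.neg l ∉ C

instance (C : Clause) : Decidable (Clause.nontaut C) := by
  unfold Clause.nontaut; infer_instance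

abbrev CNF := Finset Clause

def satClause (τ : ℕ → Bool) (C : Clause) : Prop := ∃ l ∈ C, τ l.1 = l.2

def satCNF (τ : ℕ → Bool) (F : CNF) : Prop := ∀ C ∈ F, satClause τ C

def Satisfiable (F : CNF) : Prop := ∃ τ, satCNF τ F

def occ (F : CNF) (v : ℕ) : CNF := F.filter (fun C => (v, true) ∈ C ∨ (v, false) ∈ C)

def vdeg (F : CNF) (v : ℕ) : ℕ := (occ F v).card

def ldeg (F : CNF) (l : Lit) : ℕ := (F.filter (fun C => l ∈ C)).card

def vars (F : CNF) : Finset ℕ := F.sup (fun C => C.image Prod.fst)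

def isKCNF (k : ℕ) (F : CNF) : Prop := ∀ C ∈ F, Clause.nontaut C ∧ C.card = k

def KS (k s : ℕ) (F : CNF) : Prop := isKCNF k F ∧ ∀ v, vdeg F v ≤ s

def KPQ (k p q : ℕ) (F : CNF) : Prop :=
  isKCNF k F ∧ ∀ v, ldeg F (v, true) ≤ p ∧ ldeg F (v, false) ≤ q

def MinUnsat (F : CNF) : Prop := ¬ Satisfiable F ∧ ∀ C ∈ F, Satisfiable (F.erase C)


/-! Both polarities of `y` occur, since a pure literal could be set true and its clauses dropped.
So `y` occurs positively in one clause `P` and negatively in one clause `N`, and eliminating `y`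
by resolution preserves unsatisfiability. If the resolvent `(P - y) ∪ (N - ¬y)` is tautological,
`F` without `P` and `N` is already unsatisfiable. Otherwise, if `P - y ≠ N - ¬y`, the resolvent
has at least three literals, and replacing `P` and `N` by three of them gives a smaller
unsatisfiable (3,4)-formula: every variable of the new clause loses its occurrence in `P` or `N`.
Either way minimality of `F` is contradicted. -/

open Finset Function

lemma mem_occ {F : CNF} {v : ℕ} {C : Clause} : C ∈ occ F v ↔ C ∈ F ∧ ∃ b, (v, b) ∈ C := by
  simp [occ, Bool.exists_bool, or_comm]

lemma Clause.nontaut.ne_of_mem {C D : Clause} (hC : C.nontaut) {l : Lit} (hl : l ∈ C)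
    (hD : l.neg ∈ D) : C ≠ D := by
  rintro rfl
  exact hC l hl hD

lemma satClause_of_not_nontaut {C : Clause} (hC : ¬ C.nontaut) (τ : ℕ → Bool) :
    satClause τ C := by
  simp only [Clause.nontaut, not_forall, not_not] at hC
  obtain ⟨l, hl, hnl⟩ := hC
  by_cases hτ : τ l.1 = l.2
  · exact ⟨l, hl, hτ⟩
  · exact ⟨l.neg, hnl, Bool.eq_not_of_ne hτ⟩

lemma satClause.mono {τ : ℕ → Bool} {C D : Clause} (h : satClause τ C) (hCD : C ⊆ D) :
    satClause τ D :=
  let ⟨l, hl, hτ⟩ := h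
  ⟨l, hCD hl, hτ⟩

lemma satClause_update_of_forall_notMem {τ : ℕ → Bool} {C : Clause} {y : ℕ} {b : Bool}
    (hy : ∀ c, (y, c) ∉ C) (h : satClause τ C) : satClause (update τ y b) C := by
  obtain ⟨l, hl, hτ⟩ := h
  have hly : l.1 ≠ y := fun e => hy l.2 (e ▸ hl)
  exact ⟨l, hl, by rw [update_of_ne hly, hτ]⟩

lemma satClause_update_of_mem_erase {τ : ℕ → Bool} {C : Clause} {y : ℕ} {b : Bool} {l : Lit}
    (hl : l ∈ C.erase (y, !b)) (hτ : τ l.1 = l.2) : satClause (update τ y b) C := by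
  refine ⟨l, mem_of_mem_erase hl, ?_⟩
  by_cases hly : l.1 = y
  · have hlb : l.2 ≠ !b := fun h => ne_of_mem_erase hl (Prod.ext hly h)
    rw [hly, update_self]
    cases b <;> simpa using hlb
  · rw [update_of_ne hly, hτ]

lemma satisfiable_of_pure {F : CNF} {y : ℕ} {b : Bool} (hpure : ∀ C ∈ F, (y, !b) ∉ C)
    (h : Satisfiable (F.filter fun C => (y, b) ∉ C)) : Satisfiable F := by
  obtain ⟨τ, hτ⟩ := h
  refine ⟨update τ y b, fun C hC => ?_⟩
  by_cases hyb : (y, b) ∈ C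
  · exact ⟨(y, b), hyb, by simp⟩
  · refine satClause_update_of_forall_notMem (fun c hc => ?_) (hτ C (mem_filter.2 ⟨hC, hyb⟩))
    rcases Bool.eq_or_eq_not c b with rfl | rfl
    exacts [hyb hc, hpure C hC hc]

lemma Finset.card_lt_card_union_of_ne {α : Type*} [DecidableEq α] {A B : Finset α}
    (hcard : A.card = B.card) (hne : A ≠ B) : A.card < (A ∪ B).card :=
  card_lt_card ⟨subset_union_left, fun h =>
    hne (eq_of_subset_of_card_le (subset_union_right.trans h) hcard.le).symm⟩

lemma vdeg_mono {F G : CNF} (h : G ⊆ F) (v : ℕ) : vdeg G v ≤ vdeg F v :=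
  card_le_card (filter_subset_filter _ h)

lemma KS.mono {k s : ℕ} {F G : CNF} (hF : KS k s F) (h : G ⊆ F) : KS k s G :=
  ⟨fun C hC => hF.1 C (h hC), fun v => (vdeg_mono h v).trans (hF.2 v)⟩

lemma vdeg_insert_le {F E : CNF} {R : Clause} (hEF : E ⊆ F)
    (hRF : ∀ l ∈ R, ∃ C ∈ F, C ∉ E ∧ l ∈ C) (v : ℕ) : vdeg (insert R E) v ≤ vdeg F v := by
  by_cases hv : ∃ b, (v, b) ∈ R
  · obtain ⟨b, hb⟩ := hv
    obtain ⟨C, hCF, hCE, hbC⟩ := hRF _ hb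
    have hC : C ∈ occ F v := mem_occ.2 ⟨hCF, b, hbC⟩
    have hsub : occ (insert R E) v ⊆ insert R ((occ F v).erase C) := by
      intro D hD
      obtain ⟨hD, hDv⟩ := mem_occ.1 hD
      rcases mem_insert.1 hD with rfl | hDE
      · exact mem_insert_self _ _
      · exact mem_insert_of_mem (mem_erase.2 ⟨fun h => hCE (h ▸ hDE), mem_occ.2 ⟨hEF hDE, hDv⟩⟩)
    calc vdeg (insert R E) v ≤ ((occ F v).erase C).card + 1 :=
          (card_le_card hsub).trans (card_insert_le _ _)
      _ = vdeg F v := card_erase_add_one hC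
  · refine card_le_card fun D hD => ?_
    obtain ⟨hD, hDv⟩ := mem_occ.1 hD
    rcases mem_insert.1 hD with rfl | hDE
    · exact absurd hDv hv
    · exact mem_occ.2 ⟨hEF hDE, hDv⟩

lemma KS.insert {k s : ℕ} {F E : CNF} {R : Clause} (hF : KS k s F) (hEF : E ⊆ F)
    (hR : R.nontaut ∧ R.card = k) (hRF : ∀ l ∈ R, ∃ C ∈ F, C ∉ E ∧ l ∈ C) :
    KS k s (insert R E) :=
  ⟨fun C hC => (mem_insert.1 hC).elim (· ▸ hR) fun hCE => hF.1 C (hEF hCE),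
    fun v => (vdeg_insert_le hEF hRF v).trans (hF.2 v)⟩

def Clause.resolvent (y : ℕ) (P N : Clause) : Clause := P.erase (y, true) ∪ N.erase (y, false)

lemma le_card_resolvent {k y : ℕ} {P N : Clause} (hPk : P.card = k) (hNk : N.card = k)
    (hP : (y, true) ∈ P) (hN : (y, false) ∈ N) (hne : P.erase (y, true) ≠ N.erase (y, false)) :
    k ≤ (Clause.resolvent y P N).card := by
  have hlt := card_lt_card_union_of_ne
    (by rw [card_erase_of_mem hP, card_erase_of_mem hN, hPk, hNk]) hne
  have hk : 0 < k := hPk ▸ card_pos.2 ⟨_, hP⟩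
  rw [card_erase_of_mem hP, hPk] at hlt
  unfold Clause.resolvent
  omega

lemma satisfiable_of_satClause_resolvent {F : CNF} {y : ℕ} {P N : Clause}
    (hP : (y, true) ∈ P) (hN : (y, false) ∈ N)
    (hfree : ∀ C ∈ F, C ≠ P → C ≠ N → ∀ b, (y, b) ∉ C) {τ : ℕ → Bool}
    (hτ : satCNF τ ((F.erase P).erase N)) (hR : satClause τ (Clause.resolvent y P N)) :
    Satisfiable F := by
  have hrest : ∀ b, ∀ C ∈ F, C ≠ P → C ≠ N → satClause (update τ y b) C :=
    fun b C hC hCP hCN =>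
      satClause_update_of_forall_notMem (hfree C hC hCP hCN) (hτ C (by simp [hC, hCP, hCN]))
  obtain ⟨l, hl, hτl⟩ := hR
  rcases mem_union.1 hl with hl | hl
  · refine ⟨update τ y false, fun C hC => ?_⟩
    by_cases hCP : C = P
    · exact hCP ▸ satClause_update_of_mem_erase (b := false) hl hτl
    by_cases hCN : C = N
    · exact ⟨(y, false), hCN ▸ hN, by simp⟩
    exact hrest false C hC hCP hCN
  · refine ⟨update τ y true, fun C hC => ?_⟩
    by_cases hCN : C = N
    · exact hCN ▸ satClause_update_of_mem_erase (b := true) hl hτl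
    by_cases hCP : C = P
    · exact ⟨(y, true), hCP ▸ hP, by simp⟩
    exact hrest true C hC hCP hCN

structure IsMinimumUnsat (K : CNF → Prop) (F : CNF) : Prop where
  mem : K F
  unsat : ¬ Satisfiable F
  card_le : ∀ G, K G → ¬ Satisfiable G → F.card ≤ G.card

namespace IsMinimumUnsat

variable {k s : ℕ} {F : CNF} (hF : IsMinimumUnsat (KS k s) F)
include hF

lemma exists_mem_neg {C : Clause} (hC : C ∈ F) {l : Lit} (hl : l ∈ C) : ∃ D ∈ F, l.neg ∈ D := by
  by_contra! hpure
  have hG : ¬ Satisfiable (F.filter fun D => l ∉ D) :=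
    fun h => hF.unsat (satisfiable_of_pure (y := l.1) (b := l.2) hpure h)
  have hlt : (F.filter fun D => l ∉ D).card < F.card :=
    card_lt_card (filter_ssubset.2 ⟨C, hC, not_not.2 hl⟩)
  exact (hF.card_le _ (hF.mem.mono (filter_subset _ _)) hG).not_gt hlt

lemma exists_mem_of_vdeg_pos {y : ℕ} (hy : 0 < vdeg F y) (b : Bool) : ∃ C ∈ F, (y, b) ∈ C := by
  obtain ⟨C, hC⟩ := card_pos.1 hy
  obtain ⟨hCF, c, hc⟩ := mem_occ.1 hC
  rcases Bool.eq_or_eq_not b c with rfl | rfl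
  · exact ⟨C, hCF, hc⟩
  · exact hF.exists_mem_neg hCF hc

lemma exists_clauses_of_vdeg_eq_two {y : ℕ} (hy : vdeg F y = 2) :
    ∃ P ∈ F, ∃ N ∈ F, (y, true) ∈ P ∧ (y, false) ∈ N ∧
      ∀ C ∈ F, C ≠ P → C ≠ N → ∀ b, (y, b) ∉ C := by
  obtain ⟨P, hPF, hP⟩ := hF.exists_mem_of_vdeg_pos (by omega : 0 < vdeg F y) true
  obtain ⟨N, hNF, hN⟩ := hF.exists_mem_of_vdeg_pos (by omega : 0 < vdeg F y) false
  have hPN : P ≠ N := (hF.mem.1 P hPF).1.ne_of_mem hP hN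
  have hocc : occ F y = {P, N} :=
    (eq_of_subset_of_card_le
      (insert_subset (mem_occ.2 ⟨hPF, _, hP⟩) (singleton_subset_iff.2 (mem_occ.2 ⟨hNF, _, hN⟩)))
      (by rw [card_pair hPN]; exact hy.le)).symm
  refine ⟨P, hPF, N, hNF, hP, hN, fun C hC hCP hCN b hb => ?_⟩
  have hCy : C ∈ occ F y := mem_occ.2 ⟨hC, b, hb⟩
  simp [hocc, hCP, hCN] at hCy

lemma erase_eq_erase {y : ℕ} {P N : Clause} (hPF : P ∈ F) (hNF : N ∈ F)
    (hP : (y, true) ∈ P) (hN : (y, false) ∈ N)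
    (hfree : ∀ C ∈ F, C ≠ P → C ≠ N → ∀ b, (y, b) ∉ C) :
    P.erase (y, true) = N.erase (y, false) := by
  by_contra hne
  set E := (F.erase P).erase N with hE
  have hEF : E ⊆ F := (erase_subset _ _).trans (erase_subset _ _)
  have hPN : P ≠ N := (hF.mem.1 P hPF).1.ne_of_mem hP hN
  have hresolve : ∀ τ, satCNF τ E → ¬ satClause τ (Clause.resolvent y P N) := fun τ hτ hR =>
    hF.unsat (satisfiable_of_satClause_resolvent hP hN hfree hτ hR)
  by_cases hR : (Clause.resolvent y P N).nontaut
  · obtain ⟨R, hRsub, hRk⟩ := exists_subset_card_eq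
      (le_card_resolvent (hF.mem.1 P hPF).2 (hF.mem.1 N hNF).2 hP hN hne)
    have hRF : ∀ l ∈ R, ∃ C ∈ F, C ∉ E ∧ l ∈ C := fun l hl =>
      (mem_union.1 (hRsub hl)).elim (fun h => ⟨P, hPF, by simp [hE], mem_of_mem_erase h⟩)
        fun h => ⟨N, hNF, by simp [hE], mem_of_mem_erase h⟩
    have hG : KS k s (insert R E) :=
      hF.mem.insert hEF ⟨fun l hl hnl => hR l (hRsub hl) (hRsub hnl), hRk⟩ hRF
    have hGu : ¬ Satisfiable (insert R E) := fun ⟨τ, hτ⟩ =>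
      hresolve τ (fun C hC => hτ C (mem_insert_of_mem hC))
        ((hτ R (mem_insert_self _ _)).mono hRsub)
    have hlt : (insert R E).card < F.card := by
      have hNP : N ∈ F.erase P := mem_erase.2 ⟨hPN.symm, hNF⟩
      have hE1 : E.card + 1 = (F.erase P).card := card_erase_add_one hNP
      have hE2 : (F.erase P).card + 1 = F.card := card_erase_add_one hPF
      have := card_insert_le R E
      omega
    exact (hF.card_le _ hG hGu).not_gt hlt
  · have hGu : ¬ Satisfiable E := fun ⟨τ, hτ⟩ => hresolve τ hτ (satClause_of_not_nontaut hR τ)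
    have hlt : E.card < F.card := card_lt_card ⟨hEF, fun h => by simpa [hE] using h hPF⟩
    exact (hF.card_le _ (hF.mem.mono hEF) hGu).not_gt hlt

end IsMinimumUnsat

theorem stmt14 (F : CNF) (hF : KS 3 4 F) (hunsat : ¬ Satisfiable F)
    (hmin : ∀ G : CNF, KS 3 4 G → ¬ Satisfiable G → F.card ≤ G.card)
    (y : ℕ) (hy : vdeg F y = 2) :
    ∃ a b : Lit, ({(y, true), a, b} : Clause) ∈ F ∧
      ({(y, false), a, b} : Clause) ∈ F := by
  have hF' : IsMinimumUnsat (KS 3 4) F := ⟨hF, hunsat, hmin⟩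
  obtain ⟨P, hPF, N, hNF, hP, hN, hfree⟩ := hF'.exists_clauses_of_vdeg_eq_two hy
  have hPN := hF'.erase_eq_erase hPF hNF hP hN hfree
  have hcard : (P.erase (y, true)).card = 2 := by rw [card_erase_of_mem hP, (hF.1 P hPF).2]
  obtain ⟨a, b, -, hab⟩ := card_eq_two.1 hcard
  refine ⟨a, b, ?_, ?_⟩
  · rwa [← hab, insert_erase hP]
  · rwa [← hab, hPN, insert_erase hN]
end

section
/- Every (3,3)-formula is satisfiable: if every clause has exactly 3 distinct literals and every variable occurs in at most 3 clauses, there is a satisfying assignment. -/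
/-!
Tovey's argument: in a formula whose clauses have `k` variables each and whose variables
occur in at most `s ≤ k` clauses, double counting the clause–variable incidences gives Hall's
condition, so every clause can be given a variable of its own. Setting each such variable to
satisfy its clause satisfies the formula.
-/

theorem Clause.nontaut.injOn_fst {C : Clause} (hC : C.nontaut) :
    Set.InjOn Prod.fst (C : Set Lit) := by
  rintro ⟨v, b⟩ hl ⟨w, c⟩ hm (rfl : v = w)
  by_contra hne
  have hcb : c = !b := by cases b <;> cases c <;> simp_all
  exact hC _ hl (by rw [Lit.neg, ← hcb]; exact hm)

theorem Clause.nontaut.card_image_fst {C : Clause} (hC : C.nontaut) :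
    (C.image Prod.fst).card = C.card :=
  Finset.card_image_of_injOn hC.injOn_fst

theorem mem_occ_iff {F : CNF} {v : ℕ} {C : Clause} :
    C ∈ occ F v ↔ C ∈ F ∧ v ∈ C.image Prod.fst := by
  simp [occ, or_comm]

theorem satisfiable_of_injective_fst {F : CNF} (g : {C // C ∈ F} → Lit) (hg : ∀ C, g C ∈ C.1)
    (hinj : Function.Injective fun C => (g C).1) : Satisfiable F := by
  classical
  let τ : ℕ → Bool := fun v => if h : ∃ C, (g C).1 = v then (g h.choose).2 else true
  refine ⟨τ, fun C hC => ⟨g ⟨C, hC⟩, hg _, ?_⟩⟩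
  have h : ∃ D, (g D).1 = (g ⟨C, hC⟩).1 := ⟨_, rfl⟩
  simp only [τ, dif_pos h, hinj h.choose_spec]

theorem KS.card_le_card_biUnion_image_fst {k s : ℕ} {F : CNF} (hF : KS k s F) (hk : 0 < k)
    (hsk : s ≤ k) (S : Finset {C // C ∈ F}) :
    S.card ≤ (S.biUnion fun C => C.1.image Prod.fst).card := by
  set T := S.biUnion fun C => C.1.image Prod.fst
  have hdouble : S.card * k ≤ T.card * s := by
    refine Finset.card_mul_le_card_mul (fun C v => v ∈ C.1.image Prod.fst) (fun C hC => ?_)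
      (fun v _ => ?_)
    · calc k = (C.1.image Prod.fst).card := by
            rw [(hF.1 C C.2).1.card_image_fst, (hF.1 C C.2).2]
        _ ≤ _ := Finset.card_le_card fun v hv =>
            Finset.mem_filter.2 ⟨Finset.mem_biUnion.2 ⟨C, hC, hv⟩, hv⟩
    · calc _ ≤ (occ F v).card :=
            Finset.card_le_card_of_injOn Subtype.val
              (fun C hC => mem_occ_iff.2 ⟨C.2, (Finset.mem_filter.1 hC).2⟩)
              Subtype.val_injective.injOn
        _ ≤ s := hF.2 v
  exact Nat.le_of_mul_le_mul_right (hdouble.trans (Nat.mul_le_mul_left _ hsk)) hk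

theorem KS.satisfiable {k s : ℕ} {F : CNF} (hF : KS k s F) (hk : 0 < k) (hsk : s ≤ k) :
    Satisfiable F := by
  obtain ⟨f, hfinj, hf⟩ := (Finset.all_card_le_biUnion_card_iff_existsInjective'
    fun C : {C // C ∈ F} => C.1.image Prod.fst).1 (hF.card_le_card_biUnion_image_fst hk hsk)
  choose g hg hgf using fun C => Finset.mem_image.1 (hf C)
  exact satisfiable_of_injective_fst g hg fun C D h => hfinj <| by simpa only [hgf] using h

theorem stmt18 (F : CNF) (hF : KS 3 3 F) : Satisfiable F :=
  hF.satisfiable (by norm_num) le_rfl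
end
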